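/- arXiv:2205.13459 — 3 statements merged into one kernel-verified Lean document; each statement's English description precedes it below -/
import Mathlib

section
/- If A ∈ {0,1}^{n×n}, then the Sign-Magnetic Laplacian L^σ equals the Magnetic Laplacian L^{(q)} with parameter q = 1/4. -/
open Matrix Complex

/-- Symmetrized adjacency matrix `A_s = (A + Aᵀ)/2`. -/
noncomputable def symAdj {n : ℕ} (A : Matrix (Fin n) (Fin n) ℝ) :
    Matrix (Fin n) (Fin n) ℝ :=
  fun i j => (A i j + A j i) / 2

/-- The matrix `H^σ = A_s ⊙ (ee^⊤ − sgn(|A − Aᵀ|) + i·sgn(|A| − |Aᵀ|))`, entrywise. -/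
noncomputable def Hsigma {n : ℕ} (A : Matrix (Fin n) (Fin n) ℝ) :
    Matrix (Fin n) (Fin n) ℂ :=
  fun i j => (symAdj A i j : ℂ) *
    (((1 - Real.sign |A i j - A j i| : ℝ) : ℂ) +
      Complex.I * ((Real.sign (|A i j| - |A j i|) : ℝ) : ℂ))

/-- The degree matrix `D̄_s = Diag(|A_s| e)`. -/
noncomputable def DbarS {n : ℕ} (A : Matrix (Fin n) (Fin n) ℝ) :
    Matrix (Fin n) (Fin n) ℂ :=
  Matrix.diagonal (fun i => ((∑ j, |symAdj A i j| : ℝ) : ℂ))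

/-- The Sign-Magnetic Laplacian `L^σ = D̄_s − H^σ`. -/
noncomputable def Lsigma {n : ℕ} (A : Matrix (Fin n) (Fin n) ℝ) :
    Matrix (Fin n) (Fin n) ℂ :=
  DbarS A - Hsigma A

/-- The matrix `H^{(q)} = A_s ⊙ exp(i·2πq(A − Aᵀ))`, entrywise. -/
noncomputable def Hmagnetic {n : ℕ} (q : ℝ) (A : Matrix (Fin n) (Fin n) ℝ) :
    Matrix (Fin n) (Fin n) ℂ :=
  fun i j => (symAdj A i j : ℂ) *
    Complex.exp (Complex.I * ((2 * Real.pi * q * (A i j - A j i) : ℝ) : ℂ))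

/-- The Magnetic Laplacian `L^{(q)} = D_s − H^{(q)}`. -/
noncomputable def Lmagnetic {n : ℕ} (q : ℝ) (A : Matrix (Fin n) (Fin n) ℝ) :
    Matrix (Fin n) (Fin n) ℂ :=
  Matrix.diagonal (fun i => ((∑ j, symAdj A i j : ℝ) : ℂ)) - Hmagnetic q A

/-- if `A ∈ {0,1}^{n×n}`, then `L^σ = L^{(q)}` for `q = 1/4`. -/
theorem Lsigma_eq_magneticLaplacian_quarter {n : ℕ}
    (A : Matrix (Fin n) (Fin n) ℝ) (hA : ∀ i j, A i j = 0 ∨ A i j = 1) :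
    Lsigma A = Lmagnetic (1 / 4) A := by
  have habs : ∀ i j, |symAdj A i j| = symAdj A i j := by
    intro i j
    apply _root_.abs_of_nonneg
    rcases hA i j with h | h <;> rcases hA j i with h' | h' <;>
      simp [symAdj, h, h'] <;> norm_num
  have hH : Hsigma A = Hmagnetic (1/4) A := by
    funext i j
    have key : 2 * Real.pi * (1/4) * (A i j - A j i) = Real.pi / 2 * (A i j - A j i) := by
      ring
    rcases hA i j with h | h <;> rcases hA j i with h' | h' <;>
      simp [Hsigma, Hmagnetic, h, h', Real.sign, Complex.ext_iff,
        Complex.exp_re, Complex.exp_im, mul_comm Complex.I] <;>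
      norm_num [Real.sign, show (2:ℝ)*Real.pi*(1/4) = Real.pi/2 by ring, Real.cos_pi_div_two, Real.sin_pi_div_two, Real.pi_pos]
  have hd : (fun i => ((∑ j, |symAdj A i j| : ℝ) : ℂ)) =
      fun i => ((∑ j, symAdj A i j : ℝ) : ℂ) := by
    funext i
    norm_cast
    exact Finset.sum_congr rfl fun j _ => habs i j
  unfold Lsigma Lmagnetic DbarS
  rw [hH, hd]
end

section
/- The Sign-Magnetic Laplacian L^σ is positive semidefinite: for every x ∈ ℂⁿ, x* L^σ x ≥ 0, even when the entries of A may be negative. -/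
open Matrix Complex

open scoped ComplexOrder

/-! `H^σ` is Hermitian and each of its entries is `(A_s)ᵢⱼ` times a phase of modulus at most one.
For any Hermitian `H` dominated entrywise by a symmetric weight `w`, the AM–GM bound
`|xᵢ||xⱼ| ≤ (|xᵢ|² + |xⱼ|²)/2` and the symmetry of `w` give
`Re x* H x ≤ ∑ᵢⱼ wᵢⱼ |xᵢ||xⱼ| ≤ ∑ᵢ (∑ⱼ wᵢⱼ) |xᵢ|²`, i.e. `Diag(w e) - H` is positive semidefinite;
take `w = |A_s|`. -/

theorem sum_sum_mul_mul_le_sum_mul_sq {ι : Type*} [Fintype ι] {w : ι → ι → ℝ}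
    (hw_nonneg : ∀ i j, 0 ≤ w i j) (hw : ∀ i j, w i j = w j i) (y : ι → ℝ) :
    ∑ i, ∑ j, w i j * (y i * y j) ≤ ∑ i, (∑ j, w i j) * y i ^ 2 := by
  have hswap : ∑ i, ∑ j, w i j * y j ^ 2 = ∑ i, ∑ j, w i j * y i ^ 2 := by
    rw [Finset.sum_comm]; simp only [hw]
  calc ∑ i, ∑ j, w i j * (y i * y j) ≤ ∑ i, ∑ j, w i j * ((y i ^ 2 + y j ^ 2) / 2) := by
        gcongr with i _ j _
        · exact hw_nonneg i j
        · linarith [two_mul_le_add_sq (y i) (y j)]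
    _ = (∑ i, ∑ j, w i j * y i ^ 2 + ∑ i, ∑ j, w i j * y j ^ 2) / 2 := by
        simp only [mul_div_assoc', mul_add, add_div, Finset.sum_add_distrib, Finset.sum_div]
    _ = ∑ i, (∑ j, w i j) * y i ^ 2 := by
        simp only [hswap, Finset.sum_mul]; ring

namespace Matrix

variable {ι 𝕜 : Type*} [Fintype ι] [RCLike 𝕜]

theorem IsHermitian.posSemidef_of_re_dotProduct_nonneg {M : Matrix ι ι 𝕜} (hM : M.IsHermitian)
    (h : ∀ x, 0 ≤ RCLike.re (star x ⬝ᵥ M *ᵥ x)) : M.PosSemidef :=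
  .of_dotProduct_mulVec_nonneg hM fun x =>
    RCLike.nonneg_iff.mpr ⟨h x, hM.im_star_dotProduct_mulVec_self x⟩

theorem re_star_dotProduct_diagonal_mulVec [DecidableEq ι] (d : ι → ℝ) (x : ι → 𝕜) :
    RCLike.re (star x ⬝ᵥ diagonal (fun i => (d i : 𝕜)) *ᵥ x) = ∑ i, d i * ‖x i‖ ^ 2 := by
  simp only [mulVec_diagonal, dotProduct, Pi.star_apply, map_sum]
  refine Finset.sum_congr rfl fun i _ => ?_
  rw [mul_left_comm, RCLike.star_def, RCLike.conj_mul, ← RCLike.ofReal_pow, ← RCLike.ofReal_mul,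
    RCLike.ofReal_re]

theorem re_star_dotProduct_mulVec_le {H : Matrix ι ι 𝕜} {w : ι → ι → ℝ}
    (hHw : ∀ i j, ‖H i j‖ ≤ w i j) (x : ι → 𝕜) :
    RCLike.re (star x ⬝ᵥ H *ᵥ x) ≤ ∑ i, ∑ j, w i j * (‖x i‖ * ‖x j‖) := by
  simp only [dotProduct, mulVec, Finset.mul_sum, map_sum]
  gcongr with i _ j _
  calc RCLike.re (star x i * (H i j * x j)) ≤ ‖star x i * (H i j * x j)‖ := RCLike.re_le_norm _
    _ = ‖H i j‖ * (‖x i‖ * ‖x j‖) := by simp only [norm_mul, Pi.star_apply, norm_star]; ring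
    _ ≤ w i j * (‖x i‖ * ‖x j‖) := by gcongr; exact hHw i j

theorem posSemidef_diagonal_sum_sub [DecidableEq ι] {H : Matrix ι ι 𝕜} {w : ι → ι → ℝ}
    (hH : H.IsHermitian) (hw : ∀ i j, w i j = w j i) (hHw : ∀ i j, ‖H i j‖ ≤ w i j) :
    (diagonal (fun i => ((∑ j, w i j : ℝ) : 𝕜)) - H).PosSemidef := by
  have hD : (diagonal (fun i => ((∑ j, w i j : ℝ) : 𝕜))).IsHermitian :=
    isHermitian_diagonal_iff.mpr fun i => RCLike.conj_ofReal _
  refine (hD.sub hH).posSemidef_of_re_dotProduct_nonneg fun x => ?_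
  rw [sub_mulVec, dotProduct_sub, map_sub, sub_nonneg, re_star_dotProduct_diagonal_mulVec]
  calc RCLike.re (star x ⬝ᵥ H *ᵥ x) ≤ ∑ i, ∑ j, w i j * (‖x i‖ * ‖x j‖) :=
        re_star_dotProduct_mulVec_le hHw x
    _ ≤ ∑ i, (∑ j, w i j) * ‖x i‖ ^ 2 :=
        sum_sum_mul_mul_le_sum_mul_sq (fun i j => (norm_nonneg _).trans (hHw i j)) hw _

end Matrix

theorem symAdj_comm {n : ℕ} (A : Matrix (Fin n) (Fin n) ℝ) (i j : Fin n) :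
    symAdj A i j = symAdj A j i := by
  simp only [symAdj, add_comm]

theorem Hsigma_isHermitian {n : ℕ} (A : Matrix (Fin n) (Fin n) ℝ) : (Hsigma A).IsHermitian := by
  ext i j
  simp only [conjTranspose_apply, Hsigma, star_mul', star_add, Complex.star_def,
    Complex.conj_ofReal, Complex.conj_I, symAdj_comm A j i, abs_sub_comm (A j i),
    ← neg_sub |A i j|, Real.sign_neg]
  push_cast
  ring

theorem norm_Hsigma_le {n : ℕ} (A : Matrix (Fin n) (Fin n) ℝ) (i j : Fin n) :
    ‖Hsigma A i j‖ ≤ |symAdj A i j| := by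
  rw [Hsigma, norm_mul, Complex.norm_real, Real.norm_eq_abs]
  refine mul_le_of_le_one_right (abs_nonneg _) ?_
  by_cases h : A i j = A j i
  · simp [h]
  · rw [Real.sign_of_pos (abs_pos.mpr (sub_ne_zero.mpr h))]
    simp only [sub_self, Complex.ofReal_zero, zero_add, norm_mul, Complex.norm_I, one_mul,
      Complex.norm_real, Real.norm_eq_abs]
    rcases Real.sign_apply_eq (|A i j| - |A j i|) with hs | hs | hs <;> simp [hs]

theorem Lsigma_posSemidef_general {n : ℕ} (A : Matrix (Fin n) (Fin n) ℝ) :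
    (Lsigma A).PosSemidef :=
  posSemidef_diagonal_sum_sub (Hsigma_isHermitian A) (fun i j => congrArg abs (symAdj_comm A i j))
    (norm_Hsigma_le A)

/-- `L^σ` is positive semidefinite, even when entries of `A`
may be negative: for every `x ∈ ℂⁿ`, `x* L^σ x ≥ 0`. -/
theorem Lsigma_posSemidef {n : ℕ} (A : Matrix (Fin n) (Fin n) ℝ)
    (hloop : ∀ i, A i i = 0) :
    (Lsigma A).PosSemidef :=
  Lsigma_posSemidef_general A
end

section
/- Sign-direction invariance: let G be a weighted directed graph without antiparallel edge pairs, with adjacency matrix A, and suppose A_{ij} = w ≠ 0 and A_{ji} = 0 for some i ≠ j. Let A' be obtained from A by setting A'_{ij} = 0, A'_{ji} = −w, with all other entries unchanged. Then L^σ(A') = L^σ(A). -/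
open Matrix Complex

/-- sign-direction invariance. For a weighted directed graph
without self-loops and without digons, reversing the direction of an edge
`(i,j)` of weight `w` while flipping the sign of its weight leaves `L^σ`
unchanged. -/
theorem Lsigma_reverse_edge_neg_weight {n : ℕ}
    (A : Matrix (Fin n) (Fin n) ℝ)
    (hloop : ∀ i, A i i = 0)
    (hdigon : ∀ i j, i ≠ j → A i j ≠ 0 → A j i = 0)
    (i j : Fin n) (hij : i ≠ j) (w : ℝ) (hw : w ≠ 0)
    (hAij : A i j = w) (hAji : A j i = 0)
    (A' : Matrix (Fin n) (Fin n) ℝ)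
    (hA' : A' = fun k l =>
      if k = i ∧ l = j then 0 else if k = j ∧ l = i then -w else A k l) :
    Lsigma A' = Lsigma A := by

  have hji : j ≠ i := hij.symm
  have hA'ij : A' i j = 0 := by simp [hA']
  have hA'ji : A' j i = -w := by simp [hA', hij, hji]
  have hA'other : ∀ k l, ¬(k = i ∧ l = j) → ¬(k = j ∧ l = i) → A' k l = A k l := by
    intro k l h1 h2; simp [hA', h1, h2]
  have hwpos : (0:ℝ) < |w| := abs_pos.mpr hw
  have hs1 : Real.sign |w| = 1 := Real.sign_of_pos hwpos
  have hsn : Real.sign (-|w|) = -1 := Real.sign_of_neg (by linarith)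
  have hsym : ∀ k l, ¬(k = i ∧ l = j) → ¬(k = j ∧ l = i) →
      symAdj A' k l = symAdj A k l := by
    intro k l h1 h2
    have h1' : ¬(l = i ∧ k = j) := fun h => h2 ⟨h.2, h.1⟩
    have h2' : ¬(l = j ∧ k = i) := fun h => h1 ⟨h.2, h.1⟩
    simp [symAdj, hA'other k l h1 h2, hA'other l k h1' h2']
  have hsymij : symAdj A' i j = - symAdj A i j := by
    simp [symAdj, hA'ij, hA'ji, hAij, hAji]; ring
  have hsymji : symAdj A' j i = - symAdj A j i := by
    simp [symAdj, hA'ij, hA'ji, hAij, hAji]; ring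
  have habs : ∀ k l, |symAdj A' k l| = |symAdj A k l| := by
    intro k l
    by_cases h1 : k = i ∧ l = j
    · obtain ⟨rfl, rfl⟩ := h1; rw [hsymij, abs_neg]
    by_cases h2 : k = j ∧ l = i
    · obtain ⟨rfl, rfl⟩ := h2; rw [hsymji, abs_neg]
    · rw [hsym k l h1 h2]
  have hH : Hsigma A' = Hsigma A := by
    ext k l
    by_cases h1 : k = i ∧ l = j
    · obtain ⟨rfl, rfl⟩ := h1
      simp only [Hsigma, hsymij, hA'ij, hA'ji, hAij, hAji]
      have e1 : (0:ℝ) - -w = w := by ring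
      have e2 : |(0:ℝ)| - |(-w)| = -|w| := by simp
      have e3 : w - 0 = w := by ring
      have e4 : |w| - |(0:ℝ)| = |w| := by simp
      rw [e1, e2, e3, e4, hsn, hs1]
      push_cast
      ring
    by_cases h2 : k = j ∧ l = i
    · obtain ⟨rfl, rfl⟩ := h2
      simp only [Hsigma, hsymji, hA'ij, hA'ji, hAij, hAji]
      have e1 : -w - 0 = -w := by ring
      have e2 : |(-w)| - |(0:ℝ)| = |w| := by simp
      have e3 : (0:ℝ) - w = -w := by ring
      have e4 : |(0:ℝ)| - |w| = -|w| := by simp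
      rw [e1, e2, e3, e4, abs_neg, hsn, hs1]
      push_cast
      ring
    · have h1' : ¬(l = i ∧ k = j) := fun h => h2 ⟨h.2, h.1⟩
      have h2' : ¬(l = j ∧ k = i) := fun h => h1 ⟨h.2, h.1⟩
      simp only [Hsigma, hsym k l h1 h2, hA'other k l h1 h2, hA'other l k h1' h2']
  have hD : DbarS A' = DbarS A := by
    have hsum : ∀ k, (∑ l, |symAdj A' k l|) = ∑ l, |symAdj A k l| :=
      fun k => Finset.sum_congr rfl fun l _ => habs k l
    unfold DbarS
    simp only [hsum]
  rw [Lsigma, Lsigma, hH, hD]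
end
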